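/- arXiv:1405.5107 — 2 statements merged into one kernel-verified Lean document; each statement's English description precedes it below -/
import Mathlib

section
/- Let η : ℝ → ℝ be a smooth function with compact support in [-1,1], M > 0, T > 0, and t ∈ ℝ with |t| ≤ T. Define the kernel K_t(z) = ∫_ℝ e^{i(n² t + n z)} η(n/M) dn. Then there exists a constant C depending only on η such that for all z with |z| ≥ 3MT, |K_t(z)| ≤ C / (M z²). -/
open MeasureTheory Complex

lemma bdzero (f : ℝ → ℝ) (hf : Continuous f) (h0 : ∀ x : ℝ, 1 < |x| → f x = 0) :
    f 1 = 0 ∧ f (-1) = 0 := by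
  constructor
  · have h1 : Filter.Tendsto f (nhdsWithin 1 (Set.Ioi 1)) (nhds (f 1)) :=
      (hf.tendsto 1).mono_left nhdsWithin_le_nhds
    have h2 : Filter.Tendsto f (nhdsWithin 1 (Set.Ioi 1)) (nhds 0) := by
      refine Filter.Tendsto.congr' ?_ tendsto_const_nhds
      filter_upwards [self_mem_nhdsWithin] with x hx
      exact (h0 x (by rw [abs_of_pos (lt_trans one_pos hx)]; exact hx)).symm
    exact tendsto_nhds_unique h1 h2
  · have h1 : Filter.Tendsto f (nhdsWithin (-1) (Set.Iio (-1))) (nhds (f (-1))) :=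
      (hf.tendsto (-1)).mono_left nhdsWithin_le_nhds
    have h2 : Filter.Tendsto f (nhdsWithin (-1) (Set.Iio (-1))) (nhds 0) := by
      refine Filter.Tendsto.congr' ?_ tendsto_const_nhds
      filter_upwards [self_mem_nhdsWithin] with x hx
      refine (h0 x ?_).symm
      have hx' : x < -1 := hx
      rw [abs_of_neg (by linarith)]; linarith
    exact tendsto_nhds_unique h1 h2

set_option maxHeartbeats 1000000 in
/-- Kernel estimate for the frequency-truncated Schrödinger propagator:
for `η` smooth with support in `[-1,1]`, the kernel
`K_t(z) = ∫ e^{i(n²t + nz)} η(n/M) dn` satisfies `|K_t(z)| ≤ C/(M z²)`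
for `|z| ≥ 3MT`, `|t| ≤ T`, with `C` depending only on `η`. -/
theorem stmt0 (η : ℝ → ℝ) (hη : ContDiff ℝ (⊤ : ℕ∞) η)
    (hsupp : Function.support η ⊆ Set.Icc (-1 : ℝ) 1) :
    ∃ C : ℝ, 0 < C ∧ ∀ (M T t : ℝ), 0 < M → 0 < T → |t| ≤ T →
      ∀ z : ℝ, 3 * M * T ≤ |z| →
        ‖∫ n : ℝ, Complex.exp (Complex.I * ((n ^ 2 * t + n * z : ℝ) : ℂ)) * ((η (n / M) : ℝ) : ℂ)‖
          ≤ C / (M * z ^ 2) := by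
  have hS : ContDiff ℝ (⊤ : ℕ∞) η := hη.of_le (by simp)
  have hone : (1 : WithTop ℕ∞) ≤ ((⊤ : ℕ∞) : WithTop ℕ∞) := by exact_mod_cast le_top
  have hη1 : ContDiff ℝ (⊤ : ℕ∞) (deriv η) := (contDiff_infty_iff_deriv.mp hS).2
  have hη2 : ContDiff ℝ (⊤ : ℕ∞) (deriv (deriv η)) := (contDiff_infty_iff_deriv.mp hη1).2
  have hηd : ∀ x : ℝ, DifferentiableAt ℝ η x := fun x => (hS.differentiable (by simp)).differentiableAt
  have hη1d : ∀ x : ℝ, DifferentiableAt ℝ (deriv η) x :=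
    fun x => (hη1.differentiable (by simp)).differentiableAt
  have hsupp' : ∀ x : ℝ, 1 < |x| → η x = 0 := by
    intro x hx
    by_contra h
    have hmem := hsupp (Function.mem_support.mpr h)
    rw [Set.mem_Icc] at hmem
    rcases lt_abs.mp hx with h1 | h1 <;> linarith [hmem.1, hmem.2]
  have hsupp1 : ∀ x : ℝ, 1 < |x| → deriv η x = 0 := by
    intro x hx
    have hev : η =ᶠ[nhds x] (fun _ => (0 : ℝ)) := by
      have hU : IsOpen {y : ℝ | 1 < |y|} := isOpen_lt continuous_const continuous_abs
      exact Filter.eventuallyEq_of_mem (hU.mem_nhds hx) (fun y hy => hsupp' y hy)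
    rw [hev.deriv_eq, deriv_const]
  obtain ⟨hb1, hb2⟩ := bdzero η hS.continuous hsupp'
  obtain ⟨hb3, hb4⟩ := bdzero (deriv η) hη1.continuous hsupp1
  obtain ⟨A₀, hA₀⟩ := isCompact_Icc.exists_bound_of_continuousOn
    (hS.continuous.continuousOn : ContinuousOn η (Set.Icc (-1) 1))
  obtain ⟨A₁, hA₁⟩ := isCompact_Icc.exists_bound_of_continuousOn
    (hη1.continuous.continuousOn : ContinuousOn (deriv η) (Set.Icc (-1) 1))
  obtain ⟨A₂, hA₂⟩ := isCompact_Icc.exists_bound_of_continuousOn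
    (hη2.continuous.continuousOn : ContinuousOn (deriv (deriv η)) (Set.Icc (-1) 1))
  have hA₀0 : 0 ≤ A₀ := le_trans (norm_nonneg _) (hA₀ 0 (by norm_num))
  have hA₁0 : 0 ≤ A₁ := le_trans (norm_nonneg _) (hA₁ 0 (by norm_num))
  have hA₂0 : 0 ≤ A₂ := le_trans (norm_nonneg _) (hA₂ 0 (by norm_num))
  refine ⟨2 * (54 * A₁ + 9 * A₂ + 108 * A₀) + 1, by positivity, ?_⟩
  intro M T t hM hT ht z hz
  have hzpos : 0 < |z| := lt_of_lt_of_le (by positivity) hz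
  have hzne : z ≠ 0 := abs_ne_zero.mp (ne_of_gt hzpos)
  have hMne : M ≠ 0 := ne_of_gt hM
  have hz2pos : (0 : ℝ) < z ^ 2 := by rw [← _root_.sq_abs z]; exact pow_pos hzpos 2
  set c : ℝ := 2 * t with hc_def
  set u : ℝ → ℂ := fun n => ((η (n / M) : ℝ) : ℂ) with hu_def
  set u1 : ℝ → ℂ := fun n => ((deriv η (n / M) * (1 / M) : ℝ) : ℂ) with hu1_def
  set u2 : ℝ → ℂ := fun n => ((deriv (deriv η) (n / M) * (1 / M) * (1 / M) : ℝ) : ℂ) with hu2_def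
  set w : ℝ → ℂ := fun n => ((c * n + z : ℝ) : ℂ) with hw_def
  set E : ℝ → ℂ := fun n => Complex.exp (Complex.I * ((n ^ 2 * t + n * z : ℝ) : ℂ)) with hE_def
  set P : ℝ → ℂ := fun n =>
    3 * u1 n * (c : ℂ) / w n ^ 3 - u2 n / w n ^ 2 - 3 * u n * (c : ℂ) ^ 2 / w n ^ 4 with hP_def
  set ψ : ℝ → ℂ := fun n => -Complex.I * u n / w n with hψ_def
  set ψ2 : ℝ → ℂ := fun n => (u n * (c : ℂ) - u1 n * w n) / w n ^ 3 with hψ2_def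
  set F : ℝ → ℂ := fun n => E n * (ψ n - ψ2 n) with hF_def
  have hMM : (-M : ℝ) ≤ M := by linarith
  have hcb : |c| ≤ 2 * T := by
    rw [hc_def, abs_mul, _root_.abs_two]; linarith [ht]
  have hwabs : ∀ n ∈ Set.Icc (-M) M, |z| / 3 ≤ ‖w n‖ := by
    intro n hn
    rw [Set.mem_Icc] at hn
    have hnM : |n| ≤ M := abs_le.mpr ⟨hn.1, hn.2⟩
    have h1 : |c * n| ≤ 2 * T * M := by
      rw [abs_mul]
      exact mul_le_mul hcb hnM (abs_nonneg n) (by positivity)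
    have h2 : ‖w n‖ = |c * n + z| := by
      rw [hw_def]; simp only [Complex.norm_real, Real.norm_eq_abs]
    have h3 : |z| ≤ |c * n + z| + |c * n| := by
      calc |z| = |c * n + z - c * n| := by congr 1; ring
        _ ≤ |c * n + z| + |c * n| := abs_sub _ _
    rw [h2]; linarith
  have hwne : ∀ n ∈ Set.Icc (-M) M, w n ≠ 0 := by
    intro n hn h0
    have := hwabs n hn
    rw [h0] at this
    simp at this
    linarith
  -- pointwise derivative of F
  have hderF : ∀ n ∈ Set.uIcc (-M) M, HasDerivAt F (E n * u n - E n * P n) n := by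
    intro n hn
    rw [Set.uIcc_of_le hMM] at hn
    have hwn := hwne n hn
    have hdivM : HasDerivAt (fun x : ℝ => x / M) (1 / M) n := (hasDerivAt_id n).div_const M
    have hu' : HasDerivAt u (u1 n) n := by
      have h := ((hηd (n / M)).hasDerivAt).comp n hdivM
      exact (HasDerivAt.ofReal_comp (by simpa [Function.comp_def] using h))
    have hu1' : HasDerivAt u1 (u2 n) n := by
      have h := (((hη1d (n / M)).hasDerivAt).comp n hdivM).mul_const (1 / M)
      exact (HasDerivAt.ofReal_comp (by simpa [Function.comp_def] using h))
    have hw' : HasDerivAt w ((c : ℝ) : ℂ) n := by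
      have h : HasDerivAt (fun x : ℝ => c * x + z) c n := by
        simpa using ((hasDerivAt_id n).const_mul c).add_const z
      exact HasDerivAt.ofReal_comp h
    have hE' : HasDerivAt E (Complex.I * w n * E n) n := by
      have hφ : HasDerivAt (fun x : ℝ => x ^ 2 * t + x * z) (c * n + z) n := by
        have h := ((hasDerivAt_pow 2 n).mul_const t).add ((hasDerivAt_id n).mul_const z)
        refine h.congr_deriv ?_
        push_cast
        ring
      have h2 : HasDerivAt (fun x : ℝ => Complex.I * ((x ^ 2 * t + x * z : ℝ) : ℂ))
          (Complex.I * ((c * n + z : ℝ) : ℂ)) n := (HasDerivAt.ofReal_comp hφ).const_mul Complex.I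
      have h3 := h2.cexp
      rw [hE_def, hw_def]
      simpa [mul_comm] using h3
    have hψ' : HasDerivAt ψ
        (((-Complex.I * u1 n) * w n - (-Complex.I * u n) * (c : ℂ)) / w n ^ 2) n :=
      (hu'.const_mul (-Complex.I)).div hw' hwn
    have hN : HasDerivAt (fun x => u x * (c : ℂ) - u1 x * w x)
        (u1 n * (c : ℂ) - (u2 n * w n + u1 n * (c : ℂ))) n :=
      (hu'.mul_const _).sub (hu1'.mul hw')
    have hW3 : HasDerivAt (fun x => w x ^ 3) (3 * w n ^ 2 * ((c : ℝ) : ℂ)) n := by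
      have h := (hw'.mul hw').mul hw'
      have heq : (fun x => w x ^ 3) = fun x => w x * w x * w x := by funext x; ring
      rw [heq]
      refine h.congr_deriv ?_
      simp only [Pi.mul_apply]; ring
    have hψ2' : HasDerivAt ψ2
        (((u1 n * (c : ℂ) - (u2 n * w n + u1 n * (c : ℂ))) * w n ^ 3 -
          (u n * (c : ℂ) - u1 n * w n) * (3 * w n ^ 2 * (c : ℂ))) / (w n ^ 3) ^ 2) n :=
      hN.div hW3 (pow_ne_zero 3 hwn)
    have hF' := hE'.mul (hψ'.sub hψ2')
    rw [hF_def]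
    refine hF'.congr_deriv ?_
    rw [hP_def, hψ_def, hψ2_def]
    simp only [Pi.sub_apply]
    field_simp
    ring_nf
    simp [Complex.I_sq]
    ring
  -- continuity facts
  have hcdivM : Continuous (fun n : ℝ => n / M) := continuous_id.div_const M
  have hcontu : Continuous u := Complex.continuous_ofReal.comp (hS.continuous.comp hcdivM)
  have hcontu1 : Continuous u1 :=
    Complex.continuous_ofReal.comp ((hη1.continuous.comp hcdivM).mul continuous_const)
  have hcontu2 : Continuous u2 :=
    Complex.continuous_ofReal.comp
      (((hη2.continuous.comp hcdivM).mul continuous_const).mul continuous_const)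
  have hcontw : Continuous w :=
    Complex.continuous_ofReal.comp ((continuous_const.mul continuous_id).add continuous_const)
  have hcontE : Continuous E := by
    apply Complex.continuous_exp.comp
    exact continuous_const.mul (Complex.continuous_ofReal.comp
      (((continuous_pow 2).mul continuous_const).add (continuous_id.mul continuous_const)))
  have hwneI : ∀ n ∈ Set.uIcc (-M) M, w n ≠ 0 := by
    intro n hn
    rw [Set.uIcc_of_le hMM] at hn
    exact hwne n hn
  have hcontP : ContinuousOn P (Set.uIcc (-M) M) := by
    rw [hP_def]
    apply ContinuousOn.sub
    apply ContinuousOn.sub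
    · exact ((continuous_const.mul hcontu1).mul continuous_const).continuousOn.div
        (hcontw.pow 3).continuousOn (fun n hn => pow_ne_zero 3 (hwneI n hn))
    · exact hcontu2.continuousOn.div (hcontw.pow 2).continuousOn
        (fun n hn => pow_ne_zero 2 (hwneI n hn))
    · exact ((continuous_const.mul hcontu).mul continuous_const).continuousOn.div
        (hcontw.pow 4).continuousOn (fun n hn => pow_ne_zero 4 (hwneI n hn))
  have hintEu : IntervalIntegrable (fun n => E n * u n) volume (-M) M :=
    (hcontE.mul hcontu).intervalIntegrable _ _
  have hintEP : IntervalIntegrable (fun n => E n * P n) volume (-M) M :=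
    (hcontE.continuousOn.mul hcontP).intervalIntegrable
  have hint : IntervalIntegrable (fun n => E n * u n - E n * P n) volume (-M) M :=
    hintEu.sub hintEP
  have hFTC := intervalIntegral.integral_eq_sub_of_hasDerivAt hderF hint
  have hF0 : F M - F (-M) = 0 := by
    have e1 : M / M = (1 : ℝ) := div_self hMne
    have e2 : (-M) / M = (-1 : ℝ) := by rw [neg_div, e1]
    rw [hF_def, hψ_def, hψ2_def, hu_def, hu1_def]
    simp only [e1, e2, hb1, hb2, hb3, hb4]
    simp
  have hsplit : (∫ n in (-M)..M, E n * u n) = ∫ n in (-M)..M, E n * P n := by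
    have h0 : (∫ n in (-M)..M, (E n * u n - E n * P n)) = 0 := by rw [hFTC, hF0]
    rw [intervalIntegral.integral_sub hintEu hintEP] at h0
    exact sub_eq_zero.mp h0
  have hglobal : (∫ n : ℝ, E n * u n) = ∫ n in (-M)..M, E n * u n := by
    rw [intervalIntegral.integral_of_le hMM, ← MeasureTheory.integral_Icc_eq_integral_Ioc]
    refine (setIntegral_eq_integral_of_forall_compl_eq_zero ?_).symm
    intro n hn
    rw [Set.mem_Icc] at hn
    push_neg at hn
    have h1 : 1 < |n / M| := by
      rw [abs_div, abs_of_pos hM, lt_div_iff₀ hM, one_mul]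
      rcases lt_or_ge n (-M) with h | h
      · rw [abs_of_neg (by linarith)]; linarith
      · rw [abs_of_pos (by linarith [hn h])]; exact hn h
    have h2 : η (n / M) = 0 := hsupp' _ h1
    rw [hu_def]
    simp [h2]
  -- pointwise bound on E * P
  have hTz : T ≤ |z| / (3 * M) := by
    rw [le_div_iff₀ (by positivity)]; linarith
  have hptbd : ∀ n ∈ Set.uIoc (-M) M,
      ‖E n * P n‖ ≤ (54 * A₁ + 9 * A₂ + 108 * A₀) / (M ^ 2 * |z| ^ 2) := by
    intro n hn
    have hnIcc : n ∈ Set.Icc (-M) M := by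
      rw [Set.uIoc_of_le hMM] at hn
      exact Set.Ioc_subset_Icc_self hn
    have hW := hwabs n hnIcc
    have hWpos : 0 < ‖w n‖ := lt_of_lt_of_le (by positivity) hW
    rw [Set.mem_Icc] at hnIcc
    have hnM : |n| ≤ M := abs_le.mpr ⟨hnIcc.1, hnIcc.2⟩
    have hmem : n / M ∈ Set.Icc (-1 : ℝ) 1 := by
      have habs : |n / M| ≤ 1 := by
        rw [abs_div, abs_of_pos hM]; exact (div_le_one hM).mpr hnM
      exact abs_le.mp habs
    have hub : ‖u n‖ ≤ A₀ := by
      rw [hu_def]; simpa using hA₀ _ hmem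
    have hu1b : ‖u1 n‖ ≤ A₁ * (1 / M) := by
      rw [hu1_def]
      simp only [Complex.norm_real, Real.norm_eq_abs, abs_mul]
      rw [abs_of_pos (by positivity : (0:ℝ) < 1 / M)]
      exact mul_le_mul_of_nonneg_right (by simpa [Real.norm_eq_abs] using hA₁ _ hmem)
        (by positivity)
    have hu2b : ‖u2 n‖ ≤ A₂ * (1 / M) * (1 / M) := by
      rw [hu2_def]
      simp only [Complex.norm_real, Real.norm_eq_abs, abs_mul]
      rw [abs_of_pos (by positivity : (0:ℝ) < 1 / M)]
      have h := mul_le_mul_of_nonneg_right (by simpa [Real.norm_eq_abs] using hA₂ _ hmem)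
        (by positivity : (0:ℝ) ≤ 1 / M)
      exact mul_le_mul_of_nonneg_right h (by positivity)
    have hcz : |c| ≤ 2 * (|z| / (3 * M)) := le_trans hcb (by linarith)
    have hE1 : ‖E n‖ = 1 := by
      have hEn : E n = Complex.exp (((n ^ 2 * t + n * z : ℝ) : ℂ) * Complex.I) := by
        simp only [hE_def]; rw [mul_comm]
      rw [hEn, Complex.norm_exp_ofReal_mul_I]
    rw [norm_mul, hE1, one_mul, hP_def]
    have hwnorm : ‖w n‖ = ‖w n‖ := rfl
    calc ‖3 * u1 n * (c:ℂ) / w n ^ 3 - u2 n / w n ^ 2 - 3 * u n * (c:ℂ) ^ 2 / w n ^ 4‖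
        ≤ ‖3 * u1 n * (c:ℂ) / w n ^ 3 - u2 n / w n ^ 2‖ + ‖3 * u n * (c:ℂ) ^ 2 / w n ^ 4‖ :=
          norm_sub_le _ _
      _ ≤ ‖3 * u1 n * (c:ℂ) / w n ^ 3‖ + ‖u2 n / w n ^ 2‖ + ‖3 * u n * (c:ℂ) ^ 2 / w n ^ 4‖ := by
          have := norm_sub_le (3 * u1 n * (c:ℂ) / w n ^ 3) (u2 n / w n ^ 2)
          linarith
      _ = 3 * ‖u1 n‖ * |c| / ‖w n‖ ^ 3 + ‖u2 n‖ / ‖w n‖ ^ 2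
            + 3 * ‖u n‖ * |c| ^ 2 / ‖w n‖ ^ 4 := by
          simp [norm_div, norm_mul, norm_pow, Complex.norm_real, Real.norm_eq_abs]
      _ ≤ 3 * (A₁ * (1 / M)) * (2 * (|z| / (3 * M))) / (|z| / 3) ^ 3
            + (A₂ * (1 / M) * (1 / M)) / (|z| / 3) ^ 2
            + 3 * A₀ * (2 * (|z| / (3 * M))) ^ 2 / (|z| / 3) ^ 4 := by
          gcongr
      _ = (54 * A₁ + 9 * A₂ + 108 * A₀) / (M ^ 2 * |z| ^ 2) := by
          have hsq : z ^ 2 = |z| ^ 2 := (_root_.sq_abs z).symm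
          field_simp [ne_of_gt hzpos]
          ring
  -- conclude
  show ‖∫ n : ℝ, E n * u n‖ ≤ (2 * (54 * A₁ + 9 * A₂ + 108 * A₀) + 1) / (M * z ^ 2)
  rw [hglobal, hsplit]
  have hnorm := intervalIntegral.norm_integral_le_of_norm_le_const hptbd
  have habs2M : |M - (-M)| = 2 * M := by
    rw [abs_of_pos (by linarith)]; ring
  rw [habs2M] at hnorm
  have heq : (54 * A₁ + 9 * A₂ + 108 * A₀) / (M ^ 2 * |z| ^ 2) * (2 * M)
      = 2 * (54 * A₁ + 9 * A₂ + 108 * A₀) / (M * z ^ 2) := by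
    rw [← _root_.sq_abs z]
    field_simp
  rw [heq] at hnorm
  refine le_trans hnorm ?_
  have hpos : (0 : ℝ) < M * z ^ 2 := by positivity
  exact (div_le_div_iff_of_pos_right hpos).mpr (by linarith)
end

section
/- Let (W_n)_{n∈ℝ} be a complex Brownian motion and, for N, M ∈ ℕ*, let φ_{N,M}(ω,x) = ∑_{k=-NM}^{NM-1} δ_{N,k}(ω) (1+k²/N²)^{-1/2} e^{ikx/N} with δ_{N,k} = W_{(k+1)/N} - W_{k/N}. Then for s < -1/2 there is a constant C_s such that for all n ≥ m ≥ 0 and all M, sup_{t,x} ⟨t⟩^{-1} ⟨x⟩^{-1} ‖D^s L(t)(φ_{2^n,M} - φ_{2^m,M})(x,·)‖_{L²(Ω)} ≤ C_s 2^{-m}, where L(t) = e^{itΔ} and D^s = (1-Δ)^{s/2}. -/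
open MeasureTheory

open Finset



section IntAux

lemma ediv_eq_iff_block {b k j : ℤ} (hb : 0 < b) :
    j / b = k ↔ k * b ≤ j ∧ j ≤ (k + 1) * b - 1 := by
  constructor
  · rintro rfl
    refine ⟨Int.ediv_mul_le j hb.ne', ?_⟩
    have := Int.lt_ediv_add_one_mul_self j hb
    omega
  · rintro ⟨h1, h2⟩
    have hle : k ≤ j / b := by
      have := Int.ediv_le_ediv hb h1
      rwa [Int.mul_ediv_cancel k hb.ne'] at this
    have hge : j / b ≤ k := by
      have h4 := Int.ediv_le_ediv hb h2
      have h3 : ((k + 1) * b - 1) / b = k := by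
        have he : (k + 1) * b - 1 = (b - 1) + k * b := by ring
        rw [he, Int.add_mul_ediv_right _ _ hb.ne',
          Int.ediv_eq_zero_of_lt (by omega) (by omega)]
        omega
      omega
    omega

lemma sum_blocks {E : Type*} [AddCommMonoid E] (B : ℤ) (d : ℕ) (g : ℤ → E) :
    ∑ j ∈ Finset.Icc (-(B * 2 ^ d)) (B * 2 ^ d - 1), g j
      = ∑ k ∈ Finset.Icc (-B) (B - 1),
          ∑ j ∈ Finset.Icc (k * 2 ^ d) ((k + 1) * 2 ^ d - 1), g j := by
  have hb : (0:ℤ) < 2 ^ d := by positivity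
  rw [← Finset.sum_biUnion]
  · congr 1
    ext j
    simp only [Finset.mem_biUnion, Finset.mem_Icc]
    constructor
    · rintro ⟨h1, h2⟩
      refine ⟨j / 2 ^ d, ⟨?_, ?_⟩, ((ediv_eq_iff_block hb).mp rfl)⟩
      · have h3 : (-B) * 2 ^ d ≤ j := by linarith
        have := Int.ediv_le_ediv hb h3
        rwa [Int.mul_ediv_cancel _ hb.ne'] at this
      · have : j / 2 ^ d < B := (Int.ediv_lt_iff_lt_mul hb).mpr (by linarith)
        omega
    · rintro ⟨k, ⟨hk1, hk2⟩, hj1, hj2⟩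
      have e1 : (-B) * 2 ^ d ≤ k * 2 ^ d := mul_le_mul_of_nonneg_right hk1 hb.le
      have e2 : (k + 1) * 2 ^ d ≤ B * 2 ^ d := mul_le_mul_of_nonneg_right (by omega) hb.le
      constructor
      · linarith
      · linarith
  · intro k₁ _ k₂ _ hne
    simp only [Function.onFun]
    rw [Finset.disjoint_left]
    intro j hj1 hj2
    rw [Finset.mem_Icc] at hj1 hj2
    exact hne (((ediv_eq_iff_block hb).mpr hj1).symm.trans ((ediv_eq_iff_block hb).mpr hj2))

lemma telescope (W : ℝ → ℂ) (m d : ℕ) (k : ℤ) :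
    W (((k:ℝ) + 1) / 2 ^ m) - W ((k:ℝ) / 2 ^ m)
      = ∑ j ∈ Finset.Icc (k * 2 ^ d) ((k + 1) * 2 ^ d - 1),
          (W (((j:ℝ) + 1) / 2 ^ (m + d)) - W ((j:ℝ) / 2 ^ (m + d))) := by
  have hcast : ((2 ^ d : ℕ) : ℤ) = 2 ^ d := by push_cast; ring
  have hx : (k + 1) * (2:ℤ) ^ d = k * 2 ^ d + 2 ^ d := by ring
  have hmap : Finset.Icc (k * 2 ^ d) ((k + 1) * 2 ^ d - 1)
      = (Finset.range (2 ^ d)).map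
          ⟨fun i : ℕ => k * 2 ^ d + (i : ℤ), fun a b h => by simpa using h⟩ := by
    ext j
    simp only [Finset.mem_Icc, Finset.mem_map, Finset.mem_range, Function.Embedding.coeFn_mk]
    constructor
    · rintro ⟨h1, h2⟩
      exact ⟨(j - k * 2 ^ d).toNat, by omega, by show k * 2 ^ d + (((j - k * 2 ^ d).toNat : ℕ) : ℤ) = j; omega⟩
    · rintro ⟨i, hi, rfl⟩
      have : (i : ℤ) < 2 ^ d := by omega
      show k * 2 ^ d ≤ k * 2 ^ d + (i:ℤ) ∧ k * 2 ^ d + (i:ℤ) ≤ (k + 1) * 2 ^ d - 1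
      omega
  rw [hmap, Finset.sum_map]
  show W (((k:ℝ) + 1) / 2 ^ m) - W ((k:ℝ) / 2 ^ m) = ∑ i ∈ Finset.range (2 ^ d), (W ((((k * 2 ^ d + (i:ℤ) : ℤ) : ℝ) + 1) / 2 ^ (m + d)) - W (((k * 2 ^ d + (i:ℤ) : ℤ) : ℝ) / 2 ^ (m + d)))
  have key := Finset.sum_range_sub
    (f := fun i : ℕ => W ((((k * 2 ^ d : ℤ) : ℝ) + (i : ℕ)) / 2 ^ (m + d))) (2 ^ d)
  have h2pow : (2:ℝ) ^ (m + d) = 2 ^ m * 2 ^ d := by rw [pow_add]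
  have hN : (0:ℝ) < 2 ^ m := by positivity
  have hD : (0:ℝ) < (2:ℝ) ^ d := by positivity
  have hend : (((k * 2 ^ d : ℤ) : ℝ) + ((2 ^ d : ℕ) : ℝ)) / 2 ^ (m + d) = ((k:ℝ) + 1) / 2 ^ m := by
    push_cast
    rw [h2pow]
    field_simp
  have hstart : (((k * 2 ^ d : ℤ) : ℝ) + ((0 : ℕ) : ℝ)) / 2 ^ (m + d) = (k:ℝ) / 2 ^ m := by
    push_cast
    rw [h2pow]
    field_simp
    ring
  rw [hend, hstart] at key
  rw [← key]
  apply Finset.sum_congr rfl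
  intro i _
  congr 2 <;> push_cast <;> ring

end IntAux


section L2Aux

variable {Ω : Type*} [MeasurableSpace Ω] {ℙ : Measure Ω} [IsProbabilityMeasure ℙ]

lemma conj_memL2 {f : Ω → ℂ} (hf : MemLp f 2 ℙ) :
    MemLp (fun ω => (starRingEnd ℂ) (f ω)) 2 ℙ := by
  refine MemLp.of_le hf (continuous_star.comp_aestronglyMeasurable hf.1) ?_
  filter_upwards with ω
  exact le_of_eq (RCLike.norm_conj _)

lemma int_mul_conj {f g : Ω → ℂ} (hf : MemLp f 2 ℙ) (hg : MemLp g 2 ℙ) :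
    Integrable (fun ω => f ω * (starRingEnd ℂ) (g ω)) ℙ := by
  have h : MemLp (f • fun ω => (starRingEnd ℂ) (g ω)) 1 ℙ :=
    (conj_memL2 hg).smul hf (hpqr := ⟨by rw [inv_one]; exact ENNReal.inv_two_add_inv_two⟩)
  rw [← memLp_one_iff_integrable]
  simpa [Pi.smul_apply, smul_eq_mul, Pi.mul_def] using h

variable (W : ℝ → Ω → ℂ)

lemma orth_ne
    (hL2 : ∀ a b : ℝ, MemLp (fun ω => W b ω - W a ω) 2 ℙ)
    (horth : ∀ a b c d : ℝ, a ≤ b → b ≤ c → c ≤ d →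
      ∫ ω, (W b ω - W a ω) * (starRingEnd ℂ) (W d ω - W c ω) ∂ℙ = 0)
    {N : ℝ} (hN : 0 < N) {j k : ℤ} (hjk : j ≠ k) :
    ∫ ω, (W (((j:ℝ)+1)/N) ω - W ((j:ℝ)/N) ω) *
      (starRingEnd ℂ) (W (((k:ℝ)+1)/N) ω - W ((k:ℝ)/N) ω) ∂ℙ = 0 := by
  have hmono : ∀ a b : ℝ, a ≤ b → a / N ≤ b / N := fun a b h => by gcongr
  rcases hjk.lt_or_gt with h | h
  · have hj1k : ((j:ℝ)+1) ≤ (k:ℝ) := by exact_mod_cast h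
    exact horth _ _ _ _ (hmono _ _ (by linarith)) (hmono _ _ hj1k) (hmono _ _ (by linarith))
  · have hk1j : ((k:ℝ)+1) ≤ (j:ℝ) := by exact_mod_cast h
    have h0 := horth ((k:ℝ)/N) (((k:ℝ)+1)/N) ((j:ℝ)/N) (((j:ℝ)+1)/N)
      (hmono _ _ (by linarith)) (hmono _ _ hk1j) (hmono _ _ (by linarith))
    have : ∫ ω, (W (((j:ℝ)+1)/N) ω - W ((j:ℝ)/N) ω) *
        (starRingEnd ℂ) (W (((k:ℝ)+1)/N) ω - W ((k:ℝ)/N) ω) ∂ℙ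
        = (starRingEnd ℂ) (∫ ω, (W (((k:ℝ)+1)/N) ω - W ((k:ℝ)/N) ω) *
            (starRingEnd ℂ) (W (((j:ℝ)+1)/N) ω - W ((j:ℝ)/N) ω) ∂ℙ) := by
      rw [← integral_conj]
      apply integral_congr_ae
      filter_upwards with ω
      simp [map_mul, mul_comm]
    rw [this, h0, map_zero]

lemma l2_norm_sum
    (hL2 : ∀ a b : ℝ, MemLp (fun ω => W b ω - W a ω) 2 ℙ)
    (hvar : ∀ a b : ℝ, a ≤ b → ∫ ω, ‖W b ω - W a ω‖ ^ 2 ∂ℙ = b - a)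
    (horth : ∀ a b c d : ℝ, a ≤ b → b ≤ c → c ≤ d →
      ∫ ω, (W b ω - W a ω) * (starRingEnd ℂ) (W d ω - W c ω) ∂ℙ = 0)
    {N : ℝ} (hN : 0 < N) (S : Finset ℤ) (c : ℤ → ℂ) :
    ∫ ω, ‖∑ j ∈ S, (W (((j:ℝ)+1)/N) ω - W ((j:ℝ)/N) ω) * c j‖ ^ 2 ∂ℙ
      = (∑ j ∈ S, ‖c j‖ ^ 2) / N := by
  set δ : ℤ → Ω → ℂ := fun j ω => W (((j:ℝ)+1)/N) ω - W ((j:ℝ)/N) ω with hδ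
  have hmono : ∀ a b : ℝ, a ≤ b → a / N ≤ b / N := fun a b h => by gcongr
  have hint : ∀ j k : ℤ, Integrable (fun ω => δ j ω * (starRingEnd ℂ) (δ k ω)) ℙ :=
    fun j k => int_mul_conj (hL2 _ _) (hL2 _ _)
  have hdiag : ∀ j : ℤ, ∫ ω, δ j ω * (starRingEnd ℂ) (δ j ω) ∂ℙ = ((1/N : ℝ) : ℂ) := by
    intro j
    have hpt : ∀ ω, δ j ω * (starRingEnd ℂ) (δ j ω) = ((‖δ j ω‖ ^ 2 : ℝ) : ℂ) := fun ω => by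
      rw [Complex.mul_conj]
      norm_cast
      simp [Complex.normSq_eq_norm_sq]
    simp_rw [hpt]
    have hio : ∫ ω, ((‖δ j ω‖ ^ 2 : ℝ) : ℂ) ∂ℙ = ((∫ ω, ‖δ j ω‖ ^ 2 ∂ℙ : ℝ) : ℂ) :=
      integral_ofReal
    rw [hio]
    have hv := hvar ((j:ℝ)/N) (((j:ℝ)+1)/N) (hmono _ _ (by linarith))
    have h2 : (∫ ω, ‖δ j ω‖ ^ 2 ∂ℙ) = 1 / N := by
      simp only [hδ]
      rw [hv, div_sub_div_same]
      ring_nf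
    rw [h2]
  have hexp : ∀ ω, (∑ j ∈ S, δ j ω * c j) * (starRingEnd ℂ) (∑ k ∈ S, δ k ω * c k)
      = ∑ j ∈ S, ∑ k ∈ S, (c j * (starRingEnd ℂ) (c k)) * (δ j ω * (starRingEnd ℂ) (δ k ω)) := by
    intro ω
    rw [map_sum, Finset.sum_mul_sum]
    refine Finset.sum_congr rfl fun j _ => Finset.sum_congr rfl fun k _ => ?_
    rw [map_mul]
    ring
  have hci : ∫ ω, (∑ j ∈ S, δ j ω * c j) * (starRingEnd ℂ) (∑ k ∈ S, δ k ω * c k) ∂ℙ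
      = (((∑ j ∈ S, ‖c j‖ ^ 2) / N : ℝ) : ℂ) := by
    calc ∫ ω, (∑ j ∈ S, δ j ω * c j) * (starRingEnd ℂ) (∑ k ∈ S, δ k ω * c k) ∂ℙ
        = ∑ j ∈ S, ∑ k ∈ S, (c j * (starRingEnd ℂ) (c k)) *
            ∫ ω, δ j ω * (starRingEnd ℂ) (δ k ω) ∂ℙ := by
          simp_rw [hexp]
          rw [integral_finset_sum _ (fun j _ =>
            integrable_finset_sum _ (fun k _ => ((hint j k).const_mul _)))]
          refine Finset.sum_congr rfl fun j _ => ?_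
          rw [integral_finset_sum _ (fun k _ => ((hint j k).const_mul _))]
          exact Finset.sum_congr rfl fun k _ => integral_const_mul _ _
      _ = ∑ j ∈ S, (c j * (starRingEnd ℂ) (c j)) * ((1/N : ℝ) : ℂ) := by
          refine Finset.sum_congr rfl fun j hj => ?_
          rw [Finset.sum_eq_single_of_mem j hj]
          · rw [hdiag j]
          · intro k _ hkj
            rw [orth_ne W hL2 horth hN (Ne.symm hkj), mul_zero]
      _ = (((∑ j ∈ S, ‖c j‖ ^ 2) / N : ℝ) : ℂ) := by
          push_cast
          rw [Finset.sum_div]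
          refine Finset.sum_congr rfl fun j _ => ?_
          rw [Complex.mul_conj]
          norm_cast
          rw [div_eq_mul_one_div]
          rw [one_mul, one_div]
          congr 1
          simp [Complex.normSq_eq_norm_sq]
  have hFint : Integrable (fun ω =>
      (∑ j ∈ S, δ j ω * c j) * (starRingEnd ℂ) (∑ k ∈ S, δ k ω * c k)) ℙ := by
    have : Integrable (fun ω => ∑ j ∈ S, ∑ k ∈ S,
        (c j * (starRingEnd ℂ) (c k)) * (δ j ω * (starRingEnd ℂ) (δ k ω))) ℙ :=
      integrable_finset_sum _ (fun j _ =>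
        integrable_finset_sum _ (fun k _ => ((hint j k).const_mul _)))
    exact this.congr (Filter.Eventually.of_forall fun ω => (hexp ω).symm)
  calc ∫ ω, ‖∑ j ∈ S, δ j ω * c j‖ ^ 2 ∂ℙ
      = ∫ ω, ((∑ j ∈ S, δ j ω * c j) * (starRingEnd ℂ) (∑ k ∈ S, δ k ω * c k)).re ∂ℙ := by
        refine integral_congr_ae (Filter.Eventually.of_forall fun ω => ?_)
        dsimp only
        rw [Complex.mul_conj]
        norm_cast
        simp [Complex.normSq_eq_norm_sq]
    _ = (∫ ω, (∑ j ∈ S, δ j ω * c j) * (starRingEnd ℂ) (∑ k ∈ S, δ k ω * c k) ∂ℙ).re := by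
        have := integral_re (μ := ℙ) hFint
        simpa using this
    _ = (∑ j ∈ S, ‖c j‖ ^ 2) / N := by rw [hci, Complex.ofReal_re]

end L2Aux


section Analytic

lemma norm_cexp_sub (a b : ℝ) :
    ‖Complex.exp (Complex.I * a) - Complex.exp (Complex.I * b)‖ ≤ |a - b| := by
  have hd : ∀ u : ℝ, HasDerivAt (fun v : ℝ => Complex.exp (Complex.I * v))
      (Complex.I * Complex.exp (Complex.I * u)) u := by
    intro u
    have h1 : HasDerivAt (fun v : ℝ => (Complex.I * v : ℂ)) Complex.I u := by
      simpa using (Complex.ofRealCLM.hasDerivAt (x := u)).const_mul Complex.I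
    exact ((Complex.hasDerivAt_exp (Complex.I * u)).comp u h1).congr_deriv (mul_comm _ _)
  have hb : ∀ u : ℝ, ‖Complex.I * Complex.exp (Complex.I * u)‖ ≤ 1 := by
    intro u
    rw [norm_mul, Complex.norm_I, Complex.norm_exp]
    simp [Complex.mul_re]
  have := convex_univ.norm_image_sub_le_of_norm_hasDerivWithin_le (𝕜 := ℝ)
    (f := fun v : ℝ => Complex.exp (Complex.I * v)) (C := 1)
    (fun u _ => (hd u).hasDerivWithinAt) (fun u _ => hb u) (Set.mem_univ b) (Set.mem_univ a)
  simpa [Real.norm_eq_abs] using this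

lemma sqrt_facts (y : ℝ) : |y| ≤ Real.sqrt (1 + y ^ 2) ∧ 1 ≤ Real.sqrt (1 + y ^ 2) := by
  have h0 : (0:ℝ) ≤ 1 + y ^ 2 := by positivity
  have h1 : Real.sqrt (1 + y ^ 2) ^ 2 = 1 + y ^ 2 := Real.sq_sqrt h0
  have h2 : 0 ≤ Real.sqrt (1 + y ^ 2) := Real.sqrt_nonneg _
  constructor
  · nlinarith [sq_abs y, abs_nonneg y]
  · nlinarith

lemma rpow_sq_half (u v : ℝ) (hu : 0 < u) : (u ^ (v / 2)) ^ 2 = u ^ v := by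
  rw [← Real.rpow_natCast (u ^ (v / 2)) 2, ← Real.rpow_mul hu.le]
  norm_num

lemma sqrt_eq_rpow_half (u : ℝ) (hu : 0 ≤ u) : Real.sqrt u = u ^ ((1:ℝ)/2) :=
  Real.sqrt_eq_rpow u

set_option maxHeartbeats 1000000 in
lemma coeff_bound (s t x : ℝ) (hs : s < 0) (κ κ' ε : ℝ) (h1 : κ' ≤ κ) (h2 : κ ≤ κ' + ε)
    (hε0 : 0 ≤ ε) (hε1 : ε ≤ 1) :
    ‖Complex.exp (Complex.I * ((κ^2*t + κ*x : ℝ) : ℂ)) * (((1+κ^2) ^ ((s-1)/2) : ℝ) : ℂ)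
      - Complex.exp (Complex.I * ((κ'^2*t + κ'*x : ℝ) : ℂ)) * (((1+κ'^2) ^ ((s-1)/2) : ℝ) : ℂ)‖
      ≤ (3 + |s-1| * 4 ^ (-(s/2))) * (1 + |t| + |x|) * ε * (1+κ^2) ^ (s/2) := by
  have hκpos : (0:ℝ) < 1 + κ^2 := by positivity
  have hκ'pos : (0:ℝ) < 1 + κ'^2 := by positivity
  set E : ℝ → ℂ := fun θ => Complex.exp (Complex.I * (θ : ℂ)) with hE
  set G : ℝ → ℝ := fun y => (1 + y^2) ^ ((s-1)/2) with hG
  -- split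
  have hsplit : E (κ^2*t + κ*x) * ((G κ : ℝ) : ℂ) - E (κ'^2*t + κ'*x) * ((G κ' : ℝ) : ℂ)
      = (E (κ^2*t + κ*x) - E (κ'^2*t + κ'*x)) * ((G κ : ℝ) : ℂ)
        + E (κ'^2*t + κ'*x) * (((G κ - G κ' : ℝ)) : ℂ) := by
    push_cast
    ring
  have hEnorm : ∀ θ : ℝ, ‖E θ‖ = 1 := by
    intro θ
    rw [hE]
    simp only []
    rw [Complex.norm_exp]
    simp [Complex.mul_re]
  have hGκ : 0 ≤ G κ := by rw [hG]; positivity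
  -- phase bound
  have hphase : ‖E (κ^2*t + κ*x) - E (κ'^2*t + κ'*x)‖
      ≤ ε * (3 * Real.sqrt (1+κ^2) * (|t| + |x|)) := by
    refine le_trans (norm_cexp_sub _ _) ?_
    have he : (κ^2*t + κ*x) - (κ'^2*t + κ'*x) = (κ - κ') * ((κ + κ') * t + x) := by ring
    rw [he, abs_mul]
    have hκκ' : |κ - κ'| ≤ ε := by rw [abs_of_nonneg (by linarith)]; linarith
    have habs : |(κ + κ') * t + x| ≤ 3 * Real.sqrt (1+κ^2) * (|t| + |x|) := by
      obtain ⟨hs1, hs2⟩ := sqrt_facts κ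
      have hκ'bd : |κ'| ≤ |κ| + 1 := by
        rw [abs_le]
        constructor
        · have := neg_abs_le κ; linarith
        · have := le_abs_self κ; linarith
      calc |(κ + κ') * t + x| ≤ |(κ + κ')| * |t| + |x| := by
            refine le_trans (abs_add_le _ _) ?_
            rw [abs_mul]
          _ ≤ (2 * |κ| + 1) * |t| + |x| := by
            have : |κ + κ'| ≤ 2 * |κ| + 1 := le_trans (abs_add_le _ _) (by linarith)
            have ht : (0:ℝ) ≤ |t| := abs_nonneg t
            nlinarith
          _ ≤ 3 * Real.sqrt (1+κ^2) * (|t| + |x|) := by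
            have h3 : 2 * |κ| + 1 ≤ 3 * Real.sqrt (1+κ^2) := by linarith
            have ht : (0:ℝ) ≤ |t| := abs_nonneg t
            have hx : (0:ℝ) ≤ |x| := abs_nonneg x
            nlinarith [abs_nonneg κ]
    exact mul_le_mul hκκ' habs (abs_nonneg _) hε0
  -- G difference bound
  have hGdiff : |G κ - G κ'| ≤ |s-1| * 4 ^ (-(s/2)) * (1+κ^2) ^ (s/2) * ε := by
    have hder : ∀ y ∈ Set.Icc κ' κ, HasDerivWithinAt G
        (((s-1)/2) * (1 + y^2) ^ ((s-1)/2 - 1) * (2*y)) (Set.Icc κ' κ) y := by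
      intro y _
      have h : HasDerivAt (fun y : ℝ => 1 + y ^ 2) (2 * y) y := by
        simpa using ((hasDerivAt_pow 2 y).const_add 1)
      have h2 := h.rpow_const (p := (s-1)/2) (Or.inl (by positivity))
      have h3 : HasDerivAt G (((s-1)/2) * (1 + y^2) ^ ((s-1)/2 - 1) * (2*y)) y := by
        rw [hG]
        convert h2 using 1
        ring
      exact h3.hasDerivWithinAt
    have hbound : ∀ y ∈ Set.Icc κ' κ,
        ‖((s-1)/2) * (1 + y^2) ^ ((s-1)/2 - 1) * (2*y)‖ ≤ |s-1| * 4 ^ (-(s/2)) * (1+κ^2) ^ (s/2) := by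
      intro y hy
      have hypos : (0:ℝ) < 1 + y^2 := by positivity
      obtain ⟨hys1, hys2⟩ := sqrt_facts y
      rw [Real.norm_eq_abs, abs_mul, abs_mul]
      have e1 : |(s-1)/2| = |s-1| / 2 := by rw [abs_div]; norm_num
      have e2 : |(1 + y^2) ^ ((s-1)/2 - 1)| = (1 + y^2) ^ ((s-1)/2 - 1) :=
        abs_of_nonneg (Real.rpow_nonneg hypos.le _)
      have e3 : |2*y| = 2 * |y| := by rw [abs_mul]; norm_num
      rw [e1, e2, e3]
      -- |s-1|/2 * (1+y²)^((s-1)/2-1) * (2|y|) ≤ |s-1| * (1+y²)^((s-2)/2 + 1/2) ...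
      have step1 : |s-1| / 2 * (1 + y^2) ^ ((s-1)/2 - 1) * (2 * |y|)
          ≤ |s-1| * (1 + y^2) ^ ((s-2)/2) := by
        have hyle : |y| ≤ Real.sqrt (1 + y^2) := hys1
        have hsq : Real.sqrt (1 + y^2) = (1 + y^2) ^ ((1:ℝ)/2) := sqrt_eq_rpow_half _ hypos.le
        have hmul : (1 + y^2) ^ ((s-1)/2 - 1) * (1 + y^2) ^ ((1:ℝ)/2) = (1 + y^2) ^ ((s-2)/2) := by
          rw [← Real.rpow_add hypos]
          congr 1
          ring
        have h0 : (0:ℝ) ≤ (1 + y^2) ^ ((s-1)/2 - 1) := Real.rpow_nonneg hypos.le _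
        calc |s-1| / 2 * (1 + y^2) ^ ((s-1)/2 - 1) * (2 * |y|)
            = |s-1| * ((1 + y^2) ^ ((s-1)/2 - 1) * |y|) := by ring
          _ ≤ |s-1| * ((1 + y^2) ^ ((s-1)/2 - 1) * (1 + y^2) ^ ((1:ℝ)/2)) := by
              have := mul_le_mul_of_nonneg_left (hsq ▸ hyle) h0
              exact mul_le_mul_of_nonneg_left (this) (abs_nonneg _)
          _ = |s-1| * (1 + y^2) ^ ((s-2)/2) := by rw [hmul]
      have step2 : (1 + y^2) ^ ((s-2)/2) ≤ (1 + y^2) ^ (s/2) :=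
        Real.rpow_le_rpow_of_exponent_le (by nlinarith [sq_nonneg y]) (by linarith)
      have step3 : (1 + y^2) ^ (s/2) ≤ 4 ^ (-(s/2)) * (1+κ^2) ^ (s/2) := by
        have hyκ : (1+κ^2)/4 ≤ 1 + y^2 := by
          have hy1 : y ≤ κ := hy.2
          have hy2 : κ' ≤ y := hy.1
          have hκy : |κ| ≤ |y| + 1 := by
            rw [abs_le]
            constructor
            · have := neg_abs_le y; linarith
            · have := le_abs_self y; linarith
          nlinarith [sq_abs y, sq_abs κ, abs_nonneg y, abs_nonneg κ, sq_nonneg (|y| - 1), mul_self_le_mul_self (abs_nonneg κ) hκy]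
        have := Real.rpow_le_rpow_of_nonpos (by positivity) hyκ (by linarith : s/2 ≤ 0)
        calc (1 + y^2) ^ (s/2) ≤ ((1+κ^2)/4) ^ (s/2) := this
          _ = (1+κ^2) ^ (s/2) / 4 ^ (s/2) := Real.div_rpow hκpos.le (by norm_num) _
          _ = 4 ^ (-(s/2)) * (1+κ^2) ^ (s/2) := by
              rw [Real.rpow_neg (by norm_num)]
              field_simp
      have hs1n : (0:ℝ) ≤ |s-1| := abs_nonneg _
      calc |s-1| / 2 * (1 + y^2) ^ ((s-1)/2 - 1) * (2 * |y|)
          ≤ |s-1| * (1 + y^2) ^ ((s-2)/2) := step1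
        _ ≤ |s-1| * (1 + y^2) ^ (s/2) := mul_le_mul_of_nonneg_left step2 hs1n
        _ ≤ |s-1| * (4 ^ (-(s/2)) * (1+κ^2) ^ (s/2)) := mul_le_mul_of_nonneg_left step3 hs1n
        _ = |s-1| * 4 ^ (-(s/2)) * (1+κ^2) ^ (s/2) := by ring
    have hmvt := (convex_Icc κ' κ).norm_image_sub_le_of_norm_hasDerivWithin_le
      hder hbound (Set.left_mem_Icc.mpr h1) (Set.right_mem_Icc.mpr h1)
    rw [Real.norm_eq_abs, Real.norm_eq_abs] at hmvt
    calc |G κ - G κ'| ≤ |s-1| * 4 ^ (-(s/2)) * (1+κ^2) ^ (s/2) * |κ - κ'| := hmvt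
      _ ≤ |s-1| * 4 ^ (-(s/2)) * (1+κ^2) ^ (s/2) * ε := by
          have : |κ - κ'| ≤ ε := by rw [abs_of_nonneg (by linarith)]; linarith
          have h0 : (0:ℝ) ≤ |s-1| * 4 ^ (-(s/2)) * (1+κ^2) ^ (s/2) := by positivity
          exact mul_le_mul_of_nonneg_left this h0
  -- combine
  have hGsplit : Real.sqrt (1+κ^2) * G κ = (1+κ^2) ^ (s/2) := by
    rw [hG, sqrt_eq_rpow_half _ hκpos.le, ← Real.rpow_add hκpos]
    congr 1
    ring
  calc ‖E (κ^2*t + κ*x) * ((G κ : ℝ) : ℂ) - E (κ'^2*t + κ'*x) * ((G κ' : ℝ) : ℂ)‖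
      ≤ ‖(E (κ^2*t + κ*x) - E (κ'^2*t + κ'*x)) * ((G κ : ℝ) : ℂ)‖
        + ‖E (κ'^2*t + κ'*x) * (((G κ - G κ' : ℝ)) : ℂ)‖ := by
        rw [hsplit]; exact norm_add_le _ _
    _ = ‖E (κ^2*t + κ*x) - E (κ'^2*t + κ'*x)‖ * G κ + |G κ - G κ'| := by
        rw [norm_mul, norm_mul, hEnorm, one_mul, Complex.norm_real, Complex.norm_real,
          Real.norm_eq_abs, Real.norm_eq_abs, abs_of_nonneg hGκ]
    _ ≤ (ε * (3 * Real.sqrt (1+κ^2) * (|t| + |x|))) * G κ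
        + |s-1| * 4 ^ (-(s/2)) * (1+κ^2) ^ (s/2) * ε := by
        have := mul_le_mul_of_nonneg_right hphase hGκ
        linarith [hGdiff]
    _ ≤ (3 + |s-1| * 4 ^ (-(s/2))) * (1 + |t| + |x|) * ε * (1+κ^2) ^ (s/2) := by
        have e1 : (ε * (3 * Real.sqrt (1+κ^2) * (|t| + |x|))) * G κ
            = 3 * (|t| + |x|) * ε * ((1+κ^2) ^ (s/2)) := by
          rw [← hGsplit]; ring
        rw [e1]
        have hP : (0:ℝ) ≤ (1+κ^2) ^ (s/2) := Real.rpow_nonneg hκpos.le _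
        have hT : (0:ℝ) ≤ |t| + |x| := by positivity
        have hC : (0:ℝ) ≤ |s-1| * 4 ^ (-(s/2)) := by positivity
        nlinarith [mul_nonneg (mul_nonneg hC hε0) hP, mul_nonneg hε0 hP,
          mul_nonneg (mul_nonneg hT hε0) hP]

end Analytic


section Riemann

lemma summable_aux (s : ℝ) (hs : s < -(1/2)) : Summable (fun i : ℕ => (1 + (i:ℝ)^2) ^ s) := by
  rw [← summable_nat_add_iff 1]
  have hsum : Summable (fun i : ℕ => ((i:ℝ) + 1) ^ (2*s)) := by
    have h1 : Summable (fun n : ℕ => 1 / (n:ℝ) ^ (-(2*s))) :=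
      Real.summable_one_div_nat_rpow.2 (by linarith)
    have h2 := (summable_nat_add_iff 1).2 h1
    apply h2.congr
    intro i
    rw [one_div, ← Real.rpow_neg (by positivity), neg_neg]
    push_cast
    ring_nf
  apply Summable.of_nonneg_of_le (fun i => by positivity) _ hsum
  intro i
  have hpos : (0:ℝ) < ((i:ℝ) + 1) ^ 2 := by positivity
  have step1 : (1 + ((i+1:ℕ):ℝ)^2) ^ s ≤ (((i:ℝ)+1)^2) ^ s := by
    apply Real.rpow_le_rpow_of_nonpos hpos _ (by linarith)
    push_cast
    nlinarith
  have step2 : (((i:ℝ)+1)^2 : ℝ) ^ s = ((i:ℝ)+1) ^ (2*s) := by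
    rw [← Real.rpow_natCast ((i:ℝ)+1) 2, ← Real.rpow_mul (by positivity)]
    norm_num
  calc (1 + ((i+1:ℕ):ℝ)^2) ^ s ≤ (((i:ℝ)+1)^2) ^ s := step1
    _ = ((i:ℝ)+1) ^ (2*s) := step2

lemma sum_Ico_int_eq_range (M : ℕ) (f : ℤ → ℝ) :
    ∑ k ∈ Finset.Ico (0:ℤ) (M:ℤ), f k = ∑ i ∈ Finset.range M, f (i:ℤ) := by
  have : Finset.Ico (0:ℤ) (M:ℤ) = (Finset.range M).map ⟨fun i : ℕ => (i:ℤ), fun a b h => by simp only [] at h; omega⟩ := by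
    ext j
    simp only [Finset.mem_Ico, Finset.mem_map, Finset.mem_range, Function.Embedding.coeFn_mk]
    constructor
    · rintro ⟨h1, h2⟩
      exact ⟨j.toNat, by omega, by show ((j.toNat : ℕ) : ℤ) = j; omega⟩
    · rintro ⟨i, hi, rfl⟩
      show (0:ℤ) ≤ (i:ℤ) ∧ (i:ℤ) < M
      omega
  rw [this, Finset.sum_map]
  rfl

lemma sum_Ico_int_neg_eq_range (M : ℕ) (f : ℤ → ℝ) :
    ∑ k ∈ Finset.Ico (-(M:ℤ)) (0:ℤ), f k = ∑ i ∈ Finset.range M, f (-1 - (i:ℤ)) := by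
  have : Finset.Ico (-(M:ℤ)) (0:ℤ)
      = (Finset.range M).map ⟨fun i : ℕ => -1 - (i:ℤ), fun a b h => by simp only [] at h; omega⟩ := by
    ext j
    simp only [Finset.mem_Ico, Finset.mem_map, Finset.mem_range, Function.Embedding.coeFn_mk]
    constructor
    · rintro ⟨h1, h2⟩
      exact ⟨(-1 - j).toNat, by omega, by show -1 - (((-1 - j).toNat : ℕ) : ℤ) = j; omega⟩
    · rintro ⟨i, hi, rfl⟩
      show -(M:ℤ) ≤ -1 - (i:ℤ) ∧ -1 - (i:ℤ) < 0
      omega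
  rw [this, Finset.sum_map]
  rfl

-- main Riemann-sum bound
lemma riemann_bound (s : ℝ) (hs : s < -(1/2)) (n M : ℕ) :
    ∑ j ∈ Finset.Icc (-(2^n * M : ℤ)) (2^n * M - 1), (1 + ((j:ℝ)/2^n) ^ 2) ^ s
      ≤ 2^n * (2 * ∑' i : ℕ, (1 + (i:ℝ)^2) ^ s) := by
  have hb : (0:ℤ) < 2 ^ n := by positivity
  have hbR : (0:ℝ) < 2 ^ n := by positivity
  have hIcc : Finset.Icc (-(2^n * M : ℤ)) (2^n * M - 1)
      = Finset.Icc (-((M:ℤ) * 2 ^ n)) ((M:ℤ) * 2 ^ n - 1) := by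
    congr 1 <;> ring_nf
  rw [hIcc, sum_blocks]
  -- bnd
  set bnd : ℤ → ℝ := fun k => (1 + (if 0 ≤ k then (k:ℝ) else -((k:ℝ)+1)) ^ 2) ^ s with hbnd
  have hblock : ∀ k ∈ Finset.Icc (-(M:ℤ)) ((M:ℤ) - 1),
      ∑ j ∈ Finset.Icc (k * 2 ^ n) ((k + 1) * 2 ^ n - 1), (1 + ((j:ℝ)/2^n) ^ 2) ^ s
        ≤ 2 ^ n * bnd k := by
    intro k _
    have hcard : (Finset.Icc (k * 2 ^ n) ((k + 1) * 2 ^ n - 1)).card = 2 ^ n := by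
      rw [Int.card_Icc]
      have : (k + 1) * 2 ^ n - 1 + 1 - k * 2 ^ n = 2 ^ n := by ring
      rw [this]
      rw [show ((2:ℤ)^n) = ((2^n : ℕ) : ℤ) by push_cast; ring, Int.toNat_natCast]
    have hterm : ∀ j ∈ Finset.Icc (k * 2 ^ n) ((k + 1) * 2 ^ n - 1),
        (1 + ((j:ℝ)/2^n) ^ 2) ^ s ≤ bnd k := by
      intro j hj
      rw [Finset.mem_Icc] at hj
      simp only [hbnd]
      apply Real.rpow_le_rpow_of_nonpos (by positivity) _ (by linarith)
      have hj1 : (k:ℝ) * 2 ^ n ≤ (j:ℝ) := by exact_mod_cast hj.1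
      have hj2 : (j:ℝ) ≤ ((k:ℝ) + 1) * 2 ^ n - 1 := by
        have : ((j:ℤ):ℝ) ≤ (((k + 1) * 2 ^ n - 1 : ℤ) : ℝ) := by exact_mod_cast hj.2
        push_cast at this
        linarith
    -- cases on sign of k
      by_cases hk : 0 ≤ k
      · rw [if_pos hk]
        have hk0 : (0:ℝ) ≤ (k:ℝ) := by exact_mod_cast hk
        have h1 : (k:ℝ) ≤ (j:ℝ)/2^n := by
          rw [le_div_iff₀ hbR]
          linarith
        have := pow_le_pow_left₀ hk0 h1 2
        linarith
      · rw [if_neg hk]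
        push_neg at hk
        have hk1 : (k:ℝ) + 1 ≤ 0 := by
          have : (k:ℤ) + 1 ≤ 0 := by omega
          exact_mod_cast this
        have h1 : (j:ℝ)/2^n ≤ (k:ℝ) + 1 := by
          rw [div_le_iff₀ hbR]
          nlinarith
        have h2 : -((k:ℝ)+1) ≤ -((j:ℝ)/2^n) := by linarith
        have h0 : (0:ℝ) ≤ -((k:ℝ)+1) := by linarith
        have := pow_le_pow_left₀ h0 h2 2
        have heq : (-((j:ℝ)/2^n)) ^ 2 = ((j:ℝ)/2^n) ^ 2 := by ring
        rw [heq] at this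
        linarith
    calc ∑ j ∈ Finset.Icc (k * 2 ^ n) ((k + 1) * 2 ^ n - 1), (1 + ((j:ℝ)/2^n) ^ 2) ^ s
        ≤ ∑ _j ∈ Finset.Icc (k * 2 ^ n) ((k + 1) * 2 ^ n - 1), bnd k :=
          Finset.sum_le_sum hterm
      _ = 2 ^ n * bnd k := by
          rw [Finset.sum_const, hcard, nsmul_eq_mul]
          push_cast
          ring
  have hS : Summable (fun i : ℕ => (1 + (i:ℝ)^2) ^ s) := summable_aux s hs
  have hbndsum : ∑ k ∈ Finset.Icc (-(M:ℤ)) ((M:ℤ) - 1), bnd k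
      ≤ 2 * ∑' i : ℕ, (1 + (i:ℝ)^2) ^ s := by
    have hIco : Finset.Icc (-(M:ℤ)) ((M:ℤ) - 1) = Finset.Ico (-(M:ℤ)) (M:ℤ) := by
      ext j; simp [Finset.mem_Icc, Finset.mem_Ico]
    rw [hIco]
    have hunion : Finset.Ico (-(M:ℤ)) (0:ℤ) ∪ Finset.Ico (0:ℤ) (M:ℤ) = Finset.Ico (-(M:ℤ)) (M:ℤ) :=
      Finset.Ico_union_Ico_eq_Ico (by omega) (by omega)
    rw [← hunion, Finset.sum_union (Finset.Ico_disjoint_Ico_consecutive _ _ _)]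
    rw [sum_Ico_int_eq_range, sum_Ico_int_neg_eq_range]
    have hposval : ∀ i : ℕ, bnd (i:ℤ) = (1 + (i:ℝ)^2) ^ s := by
      intro i
      simp only [hbnd]
      rw [if_pos (by omega : (0:ℤ) ≤ (i:ℤ))]
      norm_num
    have hnegval : ∀ i : ℕ, bnd (-1 - (i:ℤ)) = (1 + (i:ℝ)^2) ^ s := by
      intro i
      simp only [hbnd]
      rw [if_neg (by omega : ¬ (0:ℤ) ≤ -1 - (i:ℤ))]
      congr 2
      push_cast
      ring
    simp_rw [hposval, hnegval]
    have hle : ∑ i ∈ Finset.range M, (1 + (i:ℝ)^2) ^ s ≤ ∑' i : ℕ, (1 + (i:ℝ)^2) ^ s :=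
      hS.sum_le_tsum _ (fun i _ => by positivity)
    linarith
  calc ∑ k ∈ Finset.Icc (-(M:ℤ)) ((M:ℤ) - 1),
        ∑ j ∈ Finset.Icc (k * 2 ^ n) ((k + 1) * 2 ^ n - 1), (1 + ((j:ℝ)/2^n) ^ 2) ^ s
      ≤ ∑ k ∈ Finset.Icc (-(M:ℤ)) ((M:ℤ) - 1), 2 ^ n * bnd k := Finset.sum_le_sum hblock
    _ = 2 ^ n * ∑ k ∈ Finset.Icc (-(M:ℤ)) ((M:ℤ) - 1), bnd k := by
        rw [Finset.mul_sum]
    _ ≤ 2 ^ n * (2 * ∑' i : ℕ, (1 + (i:ℝ)^2) ^ s) := by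
        apply mul_le_mul_of_nonneg_left hbndsum (by positivity)

end Riemann

set_option maxHeartbeats 1000000 in
/-- Cauchy estimate for the approximating random data: with `W` a complex Brownian motion
(encoded through its increment structure: centered, orthogonal increments, variance `b-a`),
and `φ_{N,M} = ∑_{k=-NM}^{NM-1} (W_{(k+1)/N} - W_{k/N}) (1+k²/N²)^{-1/2} e^{ikx/N}`,
for `s < -1/2` there is `C_s` with
`⟨t⟩⁻¹⟨x⟩⁻¹ ‖D^s L(t)(φ_{2^n,M} - φ_{2^m,M})(x)‖_{L²(Ω)} ≤ C_s 2^{-m}` for all `n ≥ m`, `M ≥ 1`,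
`t`, `x`. Here `D^s L(t)` acts on the mode `e^{iκx}` by `(1+κ²)^{s/2} e^{iκ²t}`. -/
theorem stmt5 {Ω : Type*} [MeasurableSpace Ω] (ℙ : Measure Ω) [IsProbabilityMeasure ℙ]
    (W : ℝ → Ω → ℂ)
    (hmeas : ∀ r, Measurable (W r))
    (hL2 : ∀ a b : ℝ, MemLp (fun ω => W b ω - W a ω) 2 ℙ)
    (hmean : ∀ a b : ℝ, ∫ ω, (W b ω - W a ω) ∂ℙ = 0)
    (hvar : ∀ a b : ℝ, a ≤ b → ∫ ω, ‖W b ω - W a ω‖ ^ 2 ∂ℙ = b - a)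
    (horth : ∀ a b c d : ℝ, a ≤ b → b ≤ c → c ≤ d →
      ∫ ω, (W b ω - W a ω) * (starRingEnd ℂ) (W d ω - W c ω) ∂ℙ = 0)
    (s : ℝ) (hs : s < -(1 / 2)) :
    ∃ C : ℝ, 0 < C ∧ ∀ (n m M : ℕ), m ≤ n → 1 ≤ M → ∀ t x : ℝ,
      (Real.sqrt (1 + t ^ 2))⁻¹ * (Real.sqrt (1 + x ^ 2))⁻¹ *
        Real.sqrt (∫ ω,
          ‖(∑ k ∈ Finset.Icc (-(2 ^ n * M : ℤ)) (2 ^ n * M - 1),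
              (W (((k : ℝ) + 1) / 2 ^ n) ω - W ((k : ℝ) / 2 ^ n) ω) *
                Complex.exp (Complex.I *
                  ((((k : ℝ) / 2 ^ n) ^ 2 * t + ((k : ℝ) / 2 ^ n) * x : ℝ) : ℂ)) *
                (((1 + ((k : ℝ) / 2 ^ n) ^ 2) ^ ((s - 1) / 2) : ℝ) : ℂ))
            - ∑ k ∈ Finset.Icc (-(2 ^ m * M : ℤ)) (2 ^ m * M - 1),
              (W (((k : ℝ) + 1) / 2 ^ m) ω - W ((k : ℝ) / 2 ^ m) ω) *
                Complex.exp (Complex.I *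
                  ((((k : ℝ) / 2 ^ m) ^ 2 * t + ((k : ℝ) / 2 ^ m) * x : ℝ) : ℂ)) *
                (((1 + ((k : ℝ) / 2 ^ m) ^ 2) ^ ((s - 1) / 2) : ℝ) : ℂ)‖ ^ 2 ∂ℙ)
        ≤ C * (2 : ℝ) ^ (-(m : ℝ)) := by
  have hs0 : s < 0 := by linarith
  set A : ℝ := 3 + |s - 1| * 4 ^ (-(s / 2)) with hA
  have hApos : 0 < A := by positivity
  set Sm : ℝ := ∑' i : ℕ, (1 + (i : ℝ) ^ 2) ^ s with hSm
  have hSm0 : 0 ≤ Sm := tsum_nonneg (fun i => by positivity)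
  refine ⟨3 * A * Real.sqrt (2 * Sm) + 1, by positivity, ?_⟩
  intro n m M hmn hM t x
  obtain ⟨d, rfl⟩ : ∃ d, n = m + d := ⟨n - m, by omega⟩
  have hNpos : (0 : ℝ) < 2 ^ (m + d) := by positivity
  have hmpos : (0 : ℝ) < (2 : ℝ) ^ m := by positivity
  have hdR : (0 : ℝ) < (2 : ℝ) ^ d := by positivity
  have hdZ : (0 : ℤ) < 2 ^ d := by positivity
  have hpow : (2 : ℝ) ^ (m + d) = 2 ^ m * 2 ^ d := pow_add 2 m d
  set ε : ℝ := 1 / 2 ^ m with hε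
  have hε0 : 0 ≤ ε := by positivity
  have hm1 : (1 : ℝ) ≤ 2 ^ m := by exact_mod_cast Nat.one_le_two_pow (n := m)
  have hε1 : ε ≤ 1 := by rw [hε, div_le_one hmpos]; exact hm1
  set c : ℤ → ℂ := fun j =>
    Complex.exp (Complex.I *
        ((((j : ℝ) / 2 ^ (m + d)) ^ 2 * t + ((j : ℝ) / 2 ^ (m + d)) * x : ℝ) : ℂ)) *
      (((1 + ((j : ℝ) / 2 ^ (m + d)) ^ 2) ^ ((s - 1) / 2) : ℝ) : ℂ)
    - Complex.exp (Complex.I *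
        ((((((j / 2 ^ d : ℤ) : ℝ)) / 2 ^ m) ^ 2 * t + ((((j / 2 ^ d : ℤ) : ℝ)) / 2 ^ m) * x : ℝ) : ℂ)) *
      (((1 + ((((j / 2 ^ d : ℤ) : ℝ)) / 2 ^ m) ^ 2) ^ ((s - 1) / 2) : ℝ) : ℂ) with hc
  -- Step 1: rewrite the difference as a single sum
  have hpt : ∀ ω,
      (∑ k ∈ Finset.Icc (-(2 ^ (m + d) * M : ℤ)) (2 ^ (m + d) * M - 1),
          (W (((k : ℝ) + 1) / 2 ^ (m + d)) ω - W ((k : ℝ) / 2 ^ (m + d)) ω) *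
            Complex.exp (Complex.I *
              ((((k : ℝ) / 2 ^ (m + d)) ^ 2 * t + ((k : ℝ) / 2 ^ (m + d)) * x : ℝ) : ℂ)) *
            (((1 + ((k : ℝ) / 2 ^ (m + d)) ^ 2) ^ ((s - 1) / 2) : ℝ) : ℂ))
        - ∑ k ∈ Finset.Icc (-(2 ^ m * M : ℤ)) (2 ^ m * M - 1),
            (W (((k : ℝ) + 1) / 2 ^ m) ω - W ((k : ℝ) / 2 ^ m) ω) *
              Complex.exp (Complex.I *
                ((((k : ℝ) / 2 ^ m) ^ 2 * t + ((k : ℝ) / 2 ^ m) * x : ℝ) : ℂ)) *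
              (((1 + ((k : ℝ) / 2 ^ m) ^ 2) ^ ((s - 1) / 2) : ℝ) : ℂ)
      = ∑ j ∈ Finset.Icc (-(2 ^ (m + d) * M : ℤ)) (2 ^ (m + d) * M - 1),
          (W (((j : ℝ) + 1) / 2 ^ (m + d)) ω - W ((j : ℝ) / 2 ^ (m + d)) ω) * c j := by
    intro ω
    have hBig : Finset.Icc (-(2 ^ (m + d) * M : ℤ)) (2 ^ (m + d) * M - 1)
        = Finset.Icc (-((2 ^ m * (M : ℤ)) * 2 ^ d)) ((2 ^ m * (M : ℤ)) * 2 ^ d - 1) := by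
      congr 1 <;> ring
    rw [hBig, sum_blocks, sum_blocks]
    have hcoarse : ∀ k : ℤ,
        (W (((k : ℝ) + 1) / 2 ^ m) ω - W ((k : ℝ) / 2 ^ m) ω) *
            Complex.exp (Complex.I *
              ((((k : ℝ) / 2 ^ m) ^ 2 * t + ((k : ℝ) / 2 ^ m) * x : ℝ) : ℂ)) *
            (((1 + ((k : ℝ) / 2 ^ m) ^ 2) ^ ((s - 1) / 2) : ℝ) : ℂ)
        = ∑ j ∈ Finset.Icc (k * 2 ^ d) ((k + 1) * 2 ^ d - 1),
            (W (((j : ℝ) + 1) / 2 ^ (m + d)) ω - W ((j : ℝ) / 2 ^ (m + d)) ω) *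
              (Complex.exp (Complex.I *
                ((((k : ℝ) / 2 ^ m) ^ 2 * t + ((k : ℝ) / 2 ^ m) * x : ℝ) : ℂ)) *
              (((1 + ((k : ℝ) / 2 ^ m) ^ 2) ^ ((s - 1) / 2) : ℝ) : ℂ)) := by
      intro k
      rw [telescope (fun r => W r ω) m d k, Finset.sum_mul, Finset.sum_mul]
      exact Finset.sum_congr rfl fun j _ => by ring
    simp_rw [hcoarse]
    rw [← Finset.sum_sub_distrib]
    refine Finset.sum_congr rfl fun k hk => ?_
    rw [← Finset.sum_sub_distrib]
    refine Finset.sum_congr rfl fun j hj => ?_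
    rw [Finset.mem_Icc] at hj
    have hjk : j / 2 ^ d = k := (ediv_eq_iff_block hdZ).mpr hj
    simp only [hc, hjk]
    ring
  -- Step 2: L² identity
  have hL2eq : ∫ ω,
      ‖(∑ k ∈ Finset.Icc (-(2 ^ (m + d) * M : ℤ)) (2 ^ (m + d) * M - 1),
          (W (((k : ℝ) + 1) / 2 ^ (m + d)) ω - W ((k : ℝ) / 2 ^ (m + d)) ω) *
            Complex.exp (Complex.I *
              ((((k : ℝ) / 2 ^ (m + d)) ^ 2 * t + ((k : ℝ) / 2 ^ (m + d)) * x : ℝ) : ℂ)) *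
            (((1 + ((k : ℝ) / 2 ^ (m + d)) ^ 2) ^ ((s - 1) / 2) : ℝ) : ℂ))
        - ∑ k ∈ Finset.Icc (-(2 ^ m * M : ℤ)) (2 ^ m * M - 1),
            (W (((k : ℝ) + 1) / 2 ^ m) ω - W ((k : ℝ) / 2 ^ m) ω) *
              Complex.exp (Complex.I *
                ((((k : ℝ) / 2 ^ m) ^ 2 * t + ((k : ℝ) / 2 ^ m) * x : ℝ) : ℂ)) *
              (((1 + ((k : ℝ) / 2 ^ m) ^ 2) ^ ((s - 1) / 2) : ℝ) : ℂ)‖ ^ 2 ∂ℙ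
      = (∑ j ∈ Finset.Icc (-(2 ^ (m + d) * M : ℤ)) (2 ^ (m + d) * M - 1), ‖c j‖ ^ 2)
          / 2 ^ (m + d) := by
    simp_rw [hpt]
    exact l2_norm_sum W hL2 hvar horth hNpos _ c
  -- Step 3: coefficient bound
  have hT1 : (0:ℝ) < 1 + |t| + |x| := by positivity
  have hcb : ∀ j : ℤ, ‖c j‖ ^ 2
      ≤ (A * (1 + |t| + |x|) * ε) ^ 2 * (1 + ((j : ℝ) / 2 ^ (m + d)) ^ 2) ^ s := by
    intro j
    have hq : ((j / 2 ^ d : ℤ) : ℝ) / 2 ^ m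
        = (((j / 2 ^ d : ℤ) : ℝ) * 2 ^ d) / 2 ^ (m + d) := by
      rw [hpow, mul_div_mul_right _ _ hdR.ne']
    have hle1 : ((j / 2 ^ d : ℤ) : ℝ) * 2 ^ d ≤ (j : ℝ) := by
      have := Int.ediv_mul_le j hdZ.ne'
      calc ((j / 2 ^ d : ℤ) : ℝ) * 2 ^ d = (((j / 2 ^ d) * 2 ^ d : ℤ) : ℝ) := by push_cast; ring
        _ ≤ (j : ℝ) := by exact_mod_cast this
    have hκ'κ : ((j / 2 ^ d : ℤ) : ℝ) / 2 ^ m ≤ (j : ℝ) / 2 ^ (m + d) := by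
      rw [hq]
      gcongr
    have hκε : (j : ℝ) / 2 ^ (m + d) ≤ ((j / 2 ^ d : ℤ) : ℝ) / 2 ^ m + ε := by
      have hz := Int.lt_ediv_add_one_mul_self j hdZ
      have hzR : (j : ℝ) ≤ (((j / 2 ^ d : ℤ) : ℝ) + 1) * 2 ^ d := by
        have : ((j : ℤ) : ℝ) ≤ (((j / 2 ^ d + 1) * 2 ^ d : ℤ) : ℝ) := by
          exact_mod_cast hz.le
        push_cast at this
        linarith
      have h2 : (j : ℝ) / 2 ^ (m + d) ≤ ((((j / 2 ^ d : ℤ) : ℝ) + 1) * 2 ^ d) / 2 ^ (m + d) := by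
        gcongr
      calc (j : ℝ) / 2 ^ (m + d) ≤ ((((j / 2 ^ d : ℤ) : ℝ) + 1) * 2 ^ d) / 2 ^ (m + d) := h2
        _ = ((j / 2 ^ d : ℤ) : ℝ) / 2 ^ m + ε := by
            rw [hpow, mul_div_mul_right _ _ hdR.ne', add_div, hε]
    have hb := coeff_bound s t x hs0 ((j : ℝ) / 2 ^ (m + d)) (((j / 2 ^ d : ℤ) : ℝ) / 2 ^ m)
      ε hκ'κ hκε hε0 hε1
    have hcj : ‖c j‖ ≤ A * (1 + |t| + |x|) * ε * (1 + ((j : ℝ) / 2 ^ (m + d)) ^ 2) ^ (s / 2) := by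
      simp only [hc]
      exact hb
    have hκp : (0:ℝ) < 1 + ((j : ℝ) / 2 ^ (m + d)) ^ 2 := by positivity
    calc ‖c j‖ ^ 2
        ≤ (A * (1 + |t| + |x|) * ε * (1 + ((j : ℝ) / 2 ^ (m + d)) ^ 2) ^ (s / 2)) ^ 2 :=
          pow_le_pow_left₀ (norm_nonneg _) hcj 2
      _ = (A * (1 + |t| + |x|) * ε) ^ 2 * ((1 + ((j : ℝ) / 2 ^ (m + d)) ^ 2) ^ (s / 2)) ^ 2 := by
          ring
      _ = (A * (1 + |t| + |x|) * ε) ^ 2 * (1 + ((j : ℝ) / 2 ^ (m + d)) ^ 2) ^ s := by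
          rw [rpow_sq_half _ _ hκp]
  -- Step 4: sum the bounds
  have hsum : (∑ j ∈ Finset.Icc (-(2 ^ (m + d) * M : ℤ)) (2 ^ (m + d) * M - 1), ‖c j‖ ^ 2)
      ≤ (A * (1 + |t| + |x|) * ε) ^ 2 * (2 ^ (m + d) * (2 * Sm)) := by
    calc (∑ j ∈ Finset.Icc (-(2 ^ (m + d) * M : ℤ)) (2 ^ (m + d) * M - 1), ‖c j‖ ^ 2)
        ≤ ∑ j ∈ Finset.Icc (-(2 ^ (m + d) * M : ℤ)) (2 ^ (m + d) * M - 1),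
            (A * (1 + |t| + |x|) * ε) ^ 2 * (1 + ((j : ℝ) / 2 ^ (m + d)) ^ 2) ^ s :=
          Finset.sum_le_sum fun j _ => hcb j
      _ = (A * (1 + |t| + |x|) * ε) ^ 2 *
            ∑ j ∈ Finset.Icc (-(2 ^ (m + d) * M : ℤ)) (2 ^ (m + d) * M - 1),
              (1 + ((j : ℝ) / 2 ^ (m + d)) ^ 2) ^ s := by rw [Finset.mul_sum]
      _ ≤ (A * (1 + |t| + |x|) * ε) ^ 2 * (2 ^ (m + d) * (2 * Sm)) := by
          apply mul_le_mul_of_nonneg_left (riemann_bound s hs (m + d) M) (by positivity)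
  -- Step 5: conclude
  rw [hL2eq]
  have hint_le : (∑ j ∈ Finset.Icc (-(2 ^ (m + d) * M : ℤ)) (2 ^ (m + d) * M - 1), ‖c j‖ ^ 2)
        / 2 ^ (m + d)
      ≤ (A * (1 + |t| + |x|) * ε) ^ 2 * (2 * Sm) := by
    rw [div_le_iff₀ hNpos]
    calc (∑ j ∈ Finset.Icc (-(2 ^ (m + d) * M : ℤ)) (2 ^ (m + d) * M - 1), ‖c j‖ ^ 2)
        ≤ (A * (1 + |t| + |x|) * ε) ^ 2 * (2 ^ (m + d) * (2 * Sm)) := hsum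
      _ = (A * (1 + |t| + |x|) * ε) ^ 2 * (2 * Sm) * 2 ^ (m + d) := by ring
  have hKnn : (0:ℝ) ≤ A * (1 + |t| + |x|) * ε := by positivity
  have hsqrt_le : Real.sqrt ((∑ j ∈ Finset.Icc (-(2 ^ (m + d) * M : ℤ)) (2 ^ (m + d) * M - 1),
        ‖c j‖ ^ 2) / 2 ^ (m + d))
      ≤ A * (1 + |t| + |x|) * ε * Real.sqrt (2 * Sm) := by
    refine le_trans (Real.sqrt_le_sqrt hint_le) ?_
    rw [Real.sqrt_mul (sq_nonneg _), Real.sqrt_sq hKnn]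
  -- gather
  obtain ⟨hts, hts1⟩ := sqrt_facts t
  obtain ⟨hxs, hxs1⟩ := sqrt_facts x
  have htpos : (0:ℝ) < Real.sqrt (1 + t ^ 2) := lt_of_lt_of_le one_pos hts1
  have hxpos : (0:ℝ) < Real.sqrt (1 + x ^ 2) := lt_of_lt_of_le one_pos hxs1
  have hT3 : 1 + |t| + |x| ≤ 3 * (Real.sqrt (1 + t ^ 2) * Real.sqrt (1 + x ^ 2)) := by
    have h1 : Real.sqrt (1 + t ^ 2) ≤ Real.sqrt (1 + t ^ 2) * Real.sqrt (1 + x ^ 2) :=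
      le_mul_of_one_le_right htpos.le hxs1
    have h2 : Real.sqrt (1 + x ^ 2) ≤ Real.sqrt (1 + t ^ 2) * Real.sqrt (1 + x ^ 2) :=
      le_mul_of_one_le_left hxpos.le hts1
    have h3 : (1:ℝ) ≤ Real.sqrt (1 + t ^ 2) * Real.sqrt (1 + x ^ 2) :=
      one_le_mul_of_one_le_of_one_le hts1 hxs1
    linarith
  have hrpow : (2 : ℝ) ^ (-(m : ℝ)) = ε := by
    rw [hε, Real.rpow_neg (by norm_num), Real.rpow_natCast, one_div]
  rw [hrpow]
  have hfin : (Real.sqrt (1 + t ^ 2))⁻¹ * (Real.sqrt (1 + x ^ 2))⁻¹ *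
      (A * (1 + |t| + |x|) * ε * Real.sqrt (2 * Sm)) ≤ 3 * A * Real.sqrt (2 * Sm) * ε := by
    have hstep : A * (1 + |t| + |x|) * ε * Real.sqrt (2 * Sm)
        ≤ Real.sqrt (1 + t ^ 2) * Real.sqrt (1 + x ^ 2) * (3 * A * Real.sqrt (2 * Sm) * ε) := by
      have := mul_le_mul_of_nonneg_left hT3 hApos.le
      have h2 : 0 ≤ ε * Real.sqrt (2 * Sm) := by positivity
      calc A * (1 + |t| + |x|) * ε * Real.sqrt (2 * Sm)
          = (A * (1 + |t| + |x|)) * (ε * Real.sqrt (2 * Sm)) := by ring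
        _ ≤ (A * (3 * (Real.sqrt (1 + t ^ 2) * Real.sqrt (1 + x ^ 2)))) *
              (ε * Real.sqrt (2 * Sm)) := mul_le_mul_of_nonneg_right this h2
        _ = Real.sqrt (1 + t ^ 2) * Real.sqrt (1 + x ^ 2) *
              (3 * A * Real.sqrt (2 * Sm) * ε) := by ring
    calc (Real.sqrt (1 + t ^ 2))⁻¹ * (Real.sqrt (1 + x ^ 2))⁻¹ *
        (A * (1 + |t| + |x|) * ε * Real.sqrt (2 * Sm))
        ≤ (Real.sqrt (1 + t ^ 2))⁻¹ * (Real.sqrt (1 + x ^ 2))⁻¹ *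
            (Real.sqrt (1 + t ^ 2) * Real.sqrt (1 + x ^ 2) * (3 * A * Real.sqrt (2 * Sm) * ε)) := by
          apply mul_le_mul_of_nonneg_left hstep (by positivity)
      _ = ((Real.sqrt (1 + t ^ 2))⁻¹ * Real.sqrt (1 + t ^ 2)) *
            ((Real.sqrt (1 + x ^ 2))⁻¹ * Real.sqrt (1 + x ^ 2)) *
            (3 * A * Real.sqrt (2 * Sm) * ε) := by ring
      _ = 3 * A * Real.sqrt (2 * Sm) * ε := by
          rw [inv_mul_cancel₀ htpos.ne', inv_mul_cancel₀ hxpos.ne']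
          ring
  calc (Real.sqrt (1 + t ^ 2))⁻¹ * (Real.sqrt (1 + x ^ 2))⁻¹ *
      Real.sqrt ((∑ j ∈ Finset.Icc (-(2 ^ (m + d) * M : ℤ)) (2 ^ (m + d) * M - 1),
        ‖c j‖ ^ 2) / 2 ^ (m + d))
      ≤ (Real.sqrt (1 + t ^ 2))⁻¹ * (Real.sqrt (1 + x ^ 2))⁻¹ *
          (A * (1 + |t| + |x|) * ε * Real.sqrt (2 * Sm)) := by
        apply mul_le_mul_of_nonneg_left hsqrt_le (by positivity)
    _ ≤ 3 * A * Real.sqrt (2 * Sm) * ε := hfin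
    _ ≤ (3 * A * Real.sqrt (2 * Sm) + 1) * ε := by
        apply mul_le_mul_of_nonneg_right _ hε0
        linarith
end
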